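/- Let ν = 1 and 0 ≤ b < a. Then lim_{t→∞} t² (I(t) − C_1/t) = −C_1²/2; that is, I(t) = C_1/t − C_1²/(2t²) + o(t^{-2}) as t → ∞, where C_1 = (a² − b²)/2. -/

import Mathlib

/-!
For `ν = 1` the integral defining `F` is elementary, `F₁(x, t) = 1 - exp (-x² / (2t))`, so
`I(t) = 1 - exp (-C₁ / t)` exactly and the claim is the second-order Taylor expansion of `exp`
at `0`, with a cubic remainder.
-/

open MeasureTheory Filter

/-- `F ν x t = (x^{2ν}/(2^ν Γ(ν))) ∫_t^∞ s^{-(ν+1)} exp(-x²/(2s)) ds`. -/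
noncomputable def F (ν x t : ℝ) : ℝ :=
  (x ^ (2 * ν) / (2 ^ ν * Real.Gamma ν)) *
    ∫ s in Set.Ioi t, s ^ (-(ν + 1)) * Real.exp (-x ^ 2 / (2 * s))

open Real Set Topology

lemma hasDerivAt_exp_neg_div (c : ℝ) {s : ℝ} (hs : s ≠ 0) :
    HasDerivAt (fun s => exp (-c / s)) (c / s ^ 2 * exp (-c / s)) s := by
  have h := ((hasDerivAt_inv hs).const_mul (-c)).exp
  simp only [← div_eq_mul_inv] at h
  convert h using 1
  ring

lemma integral_Ioi_div_sq_mul_exp_neg_div {c t : ℝ} (hc : 0 ≤ c) (ht : 0 < t) :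
    ∫ s in Ioi t, c / s ^ 2 * exp (-c / s) = 1 - exp (-c / t) := by
  have hlim : Tendsto (fun s => exp (-c / s)) atTop (𝓝 1) := by
    simpa [Function.comp_def] using
      (continuous_exp.tendsto 0).comp (tendsto_const_nhds.div_atTop tendsto_id)
  refine integral_Ioi_of_hasDerivAt_of_nonneg' (fun s hs => ?_) (fun s _ => by positivity) hlim
  exact hasDerivAt_exp_neg_div c (ht.trans_le hs).ne'

lemma F_one_eq (x : ℝ) {t : ℝ} (ht : 0 < t) : F 1 x t = 1 - exp (-x ^ 2 / (2 * t)) := by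
  have hc : (0 : ℝ) ≤ x ^ 2 / 2 := by positivity
  have hintegrand : ∀ s ∈ Ioi t, s ^ (-((1 : ℝ) + 1)) * exp (-x ^ 2 / (2 * s))
      = (s ^ 2)⁻¹ * exp (-(x ^ 2 / 2) / s) := by
    intro s hs
    rw [show -((1 : ℝ) + 1) = -2 by norm_num, rpow_neg (ht.trans hs).le, rpow_two]
    congr 2
    ring
  rw [F, setIntegral_congr_fun measurableSet_Ioi hintegrand, ← integral_const_mul,
    show (2 : ℝ) * 1 = (2 : ℕ) by norm_num, rpow_natCast, rpow_one, Gamma_one]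
  simp only [← mul_assoc, mul_one, ← div_eq_mul_inv]
  rw [integral_Ioi_div_sq_mul_exp_neg_div hc ht]
  congr 2
  ring

lemma abs_exp_sub_one_sub_id_sub_sq_le {x : ℝ} (hx : |x| ≤ 1) :
    |exp x - 1 - x - x ^ 2 / 2| ≤ |x| ^ 3 := by
  have h := Real.exp_bound hx (n := 3) (by norm_num)
  norm_num [Finset.sum_range_succ, Nat.factorial] at h
  calc |exp x - 1 - x - x ^ 2 / 2| = |exp x - (1 + x + x ^ 2 / 2)| := by ring_nf
    _ ≤ |x| ^ 3 * (2 / 9) := h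
    _ ≤ |x| ^ 3 := by nlinarith [pow_nonneg (abs_nonneg x) 3]

lemma tendsto_sq_mul_exp_div_sub_one_sub_div (u : ℝ) :
    Tendsto (fun t => t ^ 2 * (exp (u / t) - 1 - u / t)) atTop (𝓝 (u ^ 2 / 2)) := by
  have hremainder : Tendsto (fun t => t ^ 2 * (exp (u / t) - 1 - u / t - (u / t) ^ 2 / 2))
      atTop (𝓝 0) := by
    refine squeeze_zero_norm' ?_ (tendsto_const_nhds.div_atTop tendsto_id (a := |u| ^ 3))
    filter_upwards [eventually_ge_atTop |u|, eventually_gt_atTop 0] with t hut ht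
    have hsmall : |u / t| ≤ 1 := by
      rwa [abs_div, abs_of_pos ht, div_le_one ht]
    calc ‖t ^ 2 * (exp (u / t) - 1 - u / t - (u / t) ^ 2 / 2)‖
        = t ^ 2 * |exp (u / t) - 1 - u / t - (u / t) ^ 2 / 2| := by
          rw [norm_mul, norm_pow, norm_eq_abs, abs_of_pos ht]; rfl
      _ ≤ t ^ 2 * |u / t| ^ 3 := by gcongr; exact abs_exp_sub_one_sub_id_sub_sq_le hsmall
      _ = |u| ^ 3 / t := by rw [abs_div, abs_of_pos ht]; field_simp
  rw [← add_zero (u ^ 2 / 2)]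
  refine (hremainder.const_add (u ^ 2 / 2)).congr' ?_
  filter_upwards [eventually_ne_atTop 0] with t ht
  field_simp
  ring

theorem stmt_15_general (a b : ℝ) :
    Tendsto (fun t : ℝ =>
        t ^ 2 *
          ((F 1 a t - F 1 b t) / (1 - F 1 b t) - ((a ^ 2 - b ^ 2) / 2) / t))
      atTop
      (nhds (-((a ^ 2 - b ^ 2) / 2) ^ 2 / 2)) := by
  set C := (a ^ 2 - b ^ 2) / 2
  have hI : ∀ t > 0, (F 1 a t - F 1 b t) / (1 - F 1 b t) = 1 - exp (-C / t) := by
    intro t ht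
    rw [F_one_eq a ht, F_one_eq b ht, sub_sub_sub_cancel_left, sub_sub_cancel, sub_div,
      div_self (exp_ne_zero _), ← exp_sub]
    congr 3
    field_simp
    ring
  have hlim : Tendsto (fun t => -(t ^ 2 * (exp (-C / t) - 1 - -C / t))) atTop
      (𝓝 (-C ^ 2 / 2)) := by
    convert (tendsto_sq_mul_exp_div_sub_one_sub_div (-C)).neg using 2
    ring
  refine hlim.congr' ?_
  filter_upwards [eventually_gt_atTop 0] with t ht
  rw [hI t ht]
  ring

theorem stmt_15 (a b : ℝ) (hb : 0 ≤ b) (hba : b < a) :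
    Tendsto (fun t : ℝ =>
        t ^ 2 *
          ((F 1 a t - F 1 b t) / (1 - F 1 b t) - ((a ^ 2 - b ^ 2) / 2) / t))
      atTop
      (nhds (-((a ^ 2 - b ^ 2) / 2) ^ 2 / 2)) :=
  stmt_15_general a b
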